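/- Let ζ¹, ζ² : ℝ^{d₁} × ℝ^{d₂} → ℝ satisfy mixed Lipschitz bounds: |ζ^{(m)}(x¹, x²) − ζ^{(m)}(x'¹, x'²)| ≤ τ^{(m1)} ‖x¹ − x'¹‖₂ + τ^{(m2)} ‖x² − x'²‖₂ for m = 1, 2, with all τ^{(mn)} ≥ 0. Let c¹, c² > 0 and β ∈ ℝ, and suppose c¹ ζ¹(x¹, x²) + c² ζ²(x¹, x²) + β > 0. Then every (x'¹, x'²) with c¹ ζ¹(x'¹, x'²) + c² ζ²(x'¹, x'²) + β = 0 satisfies √(‖x¹−x'¹‖₂² + ‖x²−x'²‖₂²) ≥ (c¹ ζ¹(x¹,x²) + c² ζ²(x¹,x²) + β) / √((c¹τ^{(11)} + c²τ^{(21)})² + (c¹τ^{(12)} + c²τ^{(22)})²). -/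

import Mathlib

/-! Subtracting the two mixed Lipschitz bounds, weighted by `c₁, c₂ ≥ 0`, bounds the drop of the
combined margin from `x` to a point `x'` on the decision boundary by `A ‖x₁ - x₁'‖ + B ‖x₂ - x₂'‖`,
where `A` and `B` collect the coefficients of each input modality. Cauchy–Schwarz in `ℝ²` turns
this into `√(A² + B²)` times the joint distance `√(‖x₁ - x₁'‖² + ‖x₂ - x₂'‖²)`. -/

theorem mul_add_mul_le_sqrt_mul_sqrt (a b x y : ℝ) :
    a * x + b * y ≤ √(a ^ 2 + b ^ 2) * √(x ^ 2 + y ^ 2) := by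
  rw [← Real.sqrt_mul (by positivity)]
  refine (le_abs_self _).trans (Real.abs_le_sqrt ?_)
  nlinarith [sq_nonneg (a * y - b * x)]

theorem div_sqrt_le_sqrt_of_le_mul_add_mul {M A B a b : ℝ} (h : M ≤ A * a + B * b) :
    M / √(A ^ 2 + B ^ 2) ≤ √(a ^ 2 + b ^ 2) :=
  div_le_of_le_mul₀ (Real.sqrt_nonneg _) (Real.sqrt_nonneg _)
    (by linarith [mul_add_mul_le_sqrt_mul_sqrt A B a b])

theorem weighted_sum_sub_le_of_mixed_lipschitz {E₁ E₂ : Type*}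
    [SeminormedAddCommGroup E₁] [SeminormedAddCommGroup E₂] {ζ₁ ζ₂ : E₁ → E₂ → ℝ}
    {τ₁₁ τ₁₂ τ₂₁ τ₂₂ c₁ c₂ : ℝ} (hc₁ : 0 ≤ c₁) (hc₂ : 0 ≤ c₂)
    (hLip₁ : ∀ u₁ u₂ v₁ v₂, |ζ₁ u₁ u₂ - ζ₁ v₁ v₂| ≤ τ₁₁ * ‖u₁ - v₁‖ + τ₁₂ * ‖u₂ - v₂‖)
    (hLip₂ : ∀ u₁ u₂ v₁ v₂, |ζ₂ u₁ u₂ - ζ₂ v₁ v₂| ≤ τ₂₁ * ‖u₁ - v₁‖ + τ₂₂ * ‖u₂ - v₂‖)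
    (u₁ v₁ : E₁) (u₂ v₂ : E₂) :
    (c₁ * ζ₁ u₁ u₂ + c₂ * ζ₂ u₁ u₂) - (c₁ * ζ₁ v₁ v₂ + c₂ * ζ₂ v₁ v₂) ≤
      (c₁ * τ₁₁ + c₂ * τ₂₁) * ‖u₁ - v₁‖ + (c₁ * τ₁₂ + c₂ * τ₂₂) * ‖u₂ - v₂‖ := by
  have h₁ := mul_le_mul_of_nonneg_left ((le_abs_self _).trans (hLip₁ u₁ u₂ v₁ v₂)) hc₁
  have h₂ := mul_le_mul_of_nonneg_left ((le_abs_self _).trans (hLip₂ u₁ u₂ v₁ v₂)) hc₂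
  linarith

theorem stmt_9_general {d₁ d₂ : ℕ}
    (ζ₁ ζ₂ : EuclideanSpace ℝ (Fin d₁) → EuclideanSpace ℝ (Fin d₂) → ℝ)
    (τ₁₁ τ₁₂ τ₂₁ τ₂₂ : ℝ)
    (hLip₁ : ∀ u₁ u₂ v₁ v₂, |ζ₁ u₁ u₂ - ζ₁ v₁ v₂| ≤ τ₁₁ * ‖u₁ - v₁‖ + τ₁₂ * ‖u₂ - v₂‖)
    (hLip₂ : ∀ u₁ u₂ v₁ v₂, |ζ₂ u₁ u₂ - ζ₂ v₁ v₂| ≤ τ₂₁ * ‖u₁ - v₁‖ + τ₂₂ * ‖u₂ - v₂‖)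
    (c₁ c₂ β : ℝ) (hc₁ : 0 < c₁) (hc₂ : 0 < c₂)
    (x₁ : EuclideanSpace ℝ (Fin d₁)) (x₂ : EuclideanSpace ℝ (Fin d₂)) :
    ∀ (x₁' : EuclideanSpace ℝ (Fin d₁)) (x₂' : EuclideanSpace ℝ (Fin d₂)),
      c₁ * ζ₁ x₁' x₂' + c₂ * ζ₂ x₁' x₂' + β = 0 →
      Real.sqrt (‖x₁ - x₁'‖ ^ 2 + ‖x₂ - x₂'‖ ^ 2) ≥
        (c₁ * ζ₁ x₁ x₂ + c₂ * ζ₂ x₁ x₂ + β) /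
          Real.sqrt ((c₁ * τ₁₁ + c₂ * τ₂₁) ^ 2 + (c₁ * τ₁₂ + c₂ * τ₂₂) ^ 2) := by
  intro x₁' x₂' h_boundary
  apply div_sqrt_le_sqrt_of_le_mul_add_mul
  linarith [weighted_sum_sub_le_of_mixed_lipschitz hc₁.le hc₂.le hLip₁ hLip₂ x₁ x₁' x₂ x₂']

theorem stmt_9 {d₁ d₂ : ℕ}
    (ζ₁ ζ₂ : EuclideanSpace ℝ (Fin d₁) → EuclideanSpace ℝ (Fin d₂) → ℝ)
    (τ₁₁ τ₁₂ τ₂₁ τ₂₂ : ℝ)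
    (hτ₁₁ : 0 ≤ τ₁₁) (hτ₁₂ : 0 ≤ τ₁₂) (hτ₂₁ : 0 ≤ τ₂₁) (hτ₂₂ : 0 ≤ τ₂₂)
    (hLip₁ : ∀ u₁ u₂ v₁ v₂, |ζ₁ u₁ u₂ - ζ₁ v₁ v₂| ≤ τ₁₁ * ‖u₁ - v₁‖ + τ₁₂ * ‖u₂ - v₂‖)
    (hLip₂ : ∀ u₁ u₂ v₁ v₂, |ζ₂ u₁ u₂ - ζ₂ v₁ v₂| ≤ τ₂₁ * ‖u₁ - v₁‖ + τ₂₂ * ‖u₂ - v₂‖)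
    (c₁ c₂ β : ℝ) (hc₁ : 0 < c₁) (hc₂ : 0 < c₂)
    (x₁ : EuclideanSpace ℝ (Fin d₁)) (x₂ : EuclideanSpace ℝ (Fin d₂))
    (hx : 0 < c₁ * ζ₁ x₁ x₂ + c₂ * ζ₂ x₁ x₂ + β) :
    ∀ (x₁' : EuclideanSpace ℝ (Fin d₁)) (x₂' : EuclideanSpace ℝ (Fin d₂)),
      c₁ * ζ₁ x₁' x₂' + c₂ * ζ₂ x₁' x₂' + β = 0 →
      Real.sqrt (‖x₁ - x₁'‖ ^ 2 + ‖x₂ - x₂'‖ ^ 2) ≥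
        (c₁ * ζ₁ x₁ x₂ + c₂ * ζ₂ x₁ x₂ + β) /
          Real.sqrt ((c₁ * τ₁₁ + c₂ * τ₂₁) ^ 2 + (c₁ * τ₁₂ + c₂ * τ₂₂) ^ 2) :=
  stmt_9_general ζ₁ ζ₂ τ₁₁ τ₁₂ τ₂₁ τ₂₂ hLip₁ hLip₂ c₁ c₂ β hc₁ hc₂ x₁ x₂
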